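/- arXiv:1407.5162 — 2 statements merged into one kernel-verified Lean document; each statement's English description precedes it below -/
import Mathlib

section
/- Let (T, d_T, μ, φ, ρ) be a measured rooted spatial tree: (T,d_T) a complete locally compact real tree, μ a locally finite Borel measure on T, φ: T → M continuous into a metric space, ρ ∈ T. For r > 0 let T^(r) denote the closed ball of radius r about ρ with the restricted metric, measure, map, and root. Then for all r, ε > 0, Δ_c(T^(r), T^(r+ε)) ≤ μ(T^(r+ε) \ T^(r)) + ε + sup{ d_M(φ(x), φ(y)) : x, y ∈ T^(r+ε), d_T(x,y) ≤ ε }, where Δ_c is the Gromov–Hausdorff–Prohorov-type distance on compact measured rooted spatial trees. -/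
/-!
Regard `T^(r)` as a subset of `T^(r+ε)` and glue the two along this inclusion, so that both
measures live on `T` and differ only by the mass of the shell `T^(r+ε) \ T^(r)`, which bounds
their Prohorov distance. Every point of `T^(r+ε)` is within `ε` of `T^(r)`: follow the arc from
the root towards it up to distance `r`. Pairing points at distance at most `ε` then costs at
most `ε` plus the `ε`-oscillation of `φ`. Finiteness of the shell mass and of that oscillation
come from compactness of closed balls: in a complete locally compact real tree the radii of
compact balls about a point form an interval that is open (local compactness) and closed
(completeness, since each ball is in a thickening of any smaller one).
-/

open MeasureTheory Metric

structure RealTreeStruct (T : Type*) [MetricSpace T] where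
  arc : T → T → Set T
  arc_comm : ∀ x y, arc x y = arc y x
  mem_left : ∀ x y, x ∈ arc x y
  mem_right : ∀ x y, y ∈ arc x y
  geodesic : ∀ x y z, z ∈ arc x y → dist x z + dist z y = dist x y
  compact : ∀ x y, IsCompact (arc x y)
  connected : ∀ x y, IsConnected (arc x y)
  arc_triangle : ∀ x y z, arc x z ⊆ arc x y ∪ arc y z
  subarc : ∀ x y z, z ∈ arc x y → arc x z ⊆ arc x y
  arc_subset_connected : ∀ x y (A : Set T), IsPreconnected A → x ∈ A → y ∈ A → arc x y ⊆ A

/-- `dZ` is a pseudometric. -/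
def IsPseudoMetric {Z : Type*} (dZ : Z → Z → ℝ) : Prop :=
  (∀ a, dZ a a = 0) ∧ (∀ a b, dZ a b = dZ b a) ∧
  (∀ a b c, dZ a c ≤ dZ a b + dZ b c) ∧ (∀ a b, 0 ≤ dZ a b)

/-- The Prohorov distance between two measures on `Z`, with respect to an arbitrary
pseudometric `dZ` on `Z`. -/
noncomputable def prohorovWrt {Z : Type*} [MeasurableSpace Z] (dZ : Z → Z → ℝ)
    (m m' : Measure Z) : ℝ :=
  sInf {δ : ℝ | 0 < δ ∧ ∀ A : Set Z,
    m A ≤ m' {b | ∃ a ∈ A, dZ a b < δ} + ENNReal.ofReal δ ∧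
    m' A ≤ m {b | ∃ a ∈ A, dZ a b < δ} + ENNReal.ofReal δ}

/-- The Gromov–Hausdorff–Prohorov-type distance `Δ_c` between two compact measured rooted
spatial trees `(X, d, μ, φ, ρ)` and `(X', d', μ', φ', ρ')`: the infimum over pseudometrics
on `X ⊕ X'` extending the two metrics and over correspondences `C ⊆ X × X'` containing the
pair of roots, of the Prohorov distance between the two (embedded) measures plus the
supremum over `(x,x') ∈ C` of `d_Z(x,x') + d_M(φ(x), φ'(x'))`. -/
noncomputable def DeltaC {X X' M : Type*} [MetricSpace X] [MetricSpace X'] [MetricSpace M]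
    [MeasurableSpace X] [MeasurableSpace X']
    (μ : Measure X) (μ' : Measure X') (φ : X → M) (φ' : X' → M) (ρ : X) (ρ' : X') : ℝ :=
  sInf {v : ℝ | ∃ dZ : (X ⊕ X') → (X ⊕ X') → ℝ, IsPseudoMetric dZ ∧
    (∀ a b : X, dZ (Sum.inl a) (Sum.inl b) = dist a b) ∧
    (∀ a b : X', dZ (Sum.inr a) (Sum.inr b) = dist a b) ∧
    ∃ C : Set (X × X'), (ρ, ρ') ∈ C ∧
      (∀ x : X, ∃ x' : X', (x, x') ∈ C) ∧ (∀ x' : X', ∃ x : X, (x, x') ∈ C) ∧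
      v = prohorovWrt dZ (μ.map Sum.inl) (μ'.map Sum.inr) +
        sSup {w : ℝ | ∃ p ∈ C,
          w = dZ (Sum.inl p.1) (Sum.inr p.2) + dist (φ p.1) (φ' p.2)}}

open Set

theorem totallyBounded_of_forall_subset_thickening {α : Type*} [PseudoMetricSpace α]
    {s : Set α} (h : ∀ δ > 0, ∃ K, TotallyBounded K ∧ s ⊆ thickening δ K) :
    TotallyBounded s := by
  refine totallyBounded_iff.2 fun δ hδ => ?_
  obtain ⟨K, hK, hsK⟩ := h (δ / 2) (by positivity)
  obtain ⟨t, ht, hKt⟩ := totallyBounded_iff.1 hK (δ / 2) (by positivity)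
  refine ⟨t, ht, fun x hx => ?_⟩
  obtain ⟨z, hz, hxz⟩ := mem_thickening_iff.1 (hsK hx)
  obtain ⟨w, hw, hzw⟩ := mem_iUnion₂.1 (hKt hz)
  exact mem_iUnion₂.2 ⟨w, hw, mem_ball.2 (by linarith [dist_triangle x z w, mem_ball.1 hzw])⟩

namespace RealTreeStruct

variable {T : Type*} [MetricSpace T]

theorem exists_mem_closedBall_dist_le (RT : RealTreeStruct T) {ρ y : T} {s t : ℝ}
    (hs : 0 ≤ s) (ht : 0 ≤ t) (hy : y ∈ closedBall ρ (s + t)) :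
    ∃ z ∈ closedBall ρ s, dist z y ≤ t := by
  rw [mem_closedBall, dist_comm] at hy
  rcases le_total (dist ρ y) s with hys | hsy
  · exact ⟨y, by rwa [mem_closedBall, dist_comm], by simpa using ht⟩
  -- the point of the arc `[ρ, y]` at distance `s` from `ρ`
  obtain ⟨z, hz, hρz⟩ := (RT.connected ρ y).isPreconnected.intermediate_value
    (RT.mem_left ρ y) (RT.mem_right ρ y) (continuous_const.dist continuous_id).continuousOn
    (show s ∈ Icc (dist ρ ρ) (dist ρ y) by simpa using ⟨hs, hsy⟩)
  have hgeo := RT.geodesic ρ y z hz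
  simp only [id] at hρz
  exact ⟨z, by rw [mem_closedBall, dist_comm, hρz], by linarith⟩

theorem closedBall_add_subset_cthickening (RT : RealTreeStruct T) {ρ : T} {s t : ℝ}
    (hs : 0 ≤ s) (ht : 0 ≤ t) : closedBall ρ (s + t) ⊆ cthickening t (closedBall ρ s) :=
  fun y hy =>
    let ⟨z, hz, hzy⟩ := RT.exists_mem_closedBall_dist_le hs ht hy
    mem_cthickening_of_dist_le y z t _ hz (by rwa [dist_comm])

theorem exists_pos_isCompact_closedBall_add [LocallyCompactSpace T] (RT : RealTreeStruct T)
    {ρ : T} {s : ℝ} (hs : 0 ≤ s) (hc : IsCompact (closedBall ρ s)) :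
    ∃ δ > 0, IsCompact (closedBall ρ (s + δ)) :=
  let ⟨δ, hδ, hcδ⟩ := hc.exists_isCompact_cthickening
  ⟨δ, hδ, hcδ.of_isClosed_subset isClosed_closedBall
    (RT.closedBall_add_subset_cthickening hs hδ.le)⟩

theorem isCompact_closedBall_of_forall_lt [CompleteSpace T] (RT : RealTreeStruct T) {ρ : T}
    {s : ℝ} (hs : 0 < s) (h : ∀ s' ∈ Ico 0 s, IsCompact (closedBall ρ s')) :
    IsCompact (closedBall ρ s) := by
  refine (totallyBounded_of_forall_subset_thickening fun δ hδ => ?_).isCompact_of_isClosed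
    isClosed_closedBall
  set s' := max (s - δ / 2) 0
  have hs' : s' ∈ Ico 0 s := ⟨le_max_right _ _, max_lt (by linarith) hs⟩
  refine ⟨closedBall ρ s', (h s' hs').totallyBounded, ?_⟩
  calc closedBall ρ s ⊆ closedBall ρ (s' + δ / 2) :=
        closedBall_subset_closedBall (by linarith [le_max_left (s - δ / 2) 0])
    _ ⊆ cthickening (δ / 2) (closedBall ρ s') :=
        RT.closedBall_add_subset_cthickening hs'.1 (by positivity)
    _ ⊆ thickening δ (closedBall ρ s') := cthickening_subset_thickening' hδ (by linarith) _

/-- Hopf–Rinow for real trees. -/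
theorem properSpace [CompleteSpace T] [LocallyCompactSpace T] (RT : RealTreeStruct T) :
    ProperSpace T := by
  refine .of_isCompact_closedBall_of_le 0 fun ρ s _ => ?_
  by_contra hs
  -- the infimum of the radii of non-compact balls about `ρ` is itself such a radius
  set N := {u : ℝ | ¬IsCompact (closedBall ρ u)}
  have hN : ∀ u ∈ N, 0 ≤ u := fun u hu =>
    not_lt.1 fun hu0 => hu (by rw [closedBall_eq_empty.2 hu0]; exact isCompact_empty)
  have hc : 0 ≤ sInf N := le_csInf ⟨s, hs⟩ hN
  have hcompact : IsCompact (closedBall ρ (sInf N)) := by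
    rcases hc.eq_or_lt with hc0 | hc0
    · rw [← hc0, closedBall_zero]
      exact isCompact_singleton
    · exact RT.isCompact_closedBall_of_forall_lt hc0 fun u hu =>
        not_not.1 (notMem_of_lt_csInf hu.2 ⟨0, hN⟩)
  obtain ⟨δ, hδ, hcδ⟩ := RT.exists_pos_isCompact_closedBall_add hc hcompact
  have : sInf N + δ ≤ sInf N := le_csInf ⟨s, hs⟩ fun u hu => not_lt.1 fun hlt =>
    hu (hcδ.of_isClosed_subset isClosed_closedBall (closedBall_subset_closedBall hlt.le))
  linarith

end RealTreeStruct

theorem isPseudoMetric_dist_comp {Z T : Type*} [PseudoMetricSpace T] (f : Z → T) :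
    IsPseudoMetric fun a b => dist (f a) (f b) :=
  ⟨fun _ => dist_self _, fun _ _ => dist_comm _ _, fun _ _ _ => dist_triangle _ _ _,
    fun _ _ => dist_nonneg⟩

theorem deltaC_le {X X' M : Type*} [MetricSpace X] [MetricSpace X'] [MetricSpace M]
    [MeasurableSpace X] [MeasurableSpace X'] {μ : Measure X} {μ' : Measure X'} {φ : X → M}
    {φ' : X' → M} {ρ : X} {ρ' : X'} {dZ : X ⊕ X' → X ⊕ X' → ℝ}
    (hdZ : IsPseudoMetric dZ) (hinl : ∀ a b : X, dZ (.inl a) (.inl b) = dist a b)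
    (hinr : ∀ a b : X', dZ (.inr a) (.inr b) = dist a b) {C : Set (X × X')}
    (hρ : (ρ, ρ') ∈ C)
    (hC : ∀ x, ∃ x', (x, x') ∈ C) (hC' : ∀ x', ∃ x, (x, x') ∈ C) :
    DeltaC μ μ' φ φ' ρ ρ' ≤ prohorovWrt dZ (μ.map Sum.inl) (μ'.map Sum.inr) +
      sSup {w | ∃ p ∈ C, w = dZ (.inl p.1) (.inr p.2) + dist (φ p.1) (φ' p.2)} := by
  refine csInf_le ⟨0, ?_⟩ ⟨dZ, hdZ, hinl, hinr, C, hρ, hC, hC', rfl⟩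
  rintro _ ⟨d, hd, -, -, C, -, -, -, rfl⟩
  refine add_nonneg (Real.sInf_nonneg fun δ hδ => hδ.1.le) (Real.sSup_nonneg ?_)
  rintro _ ⟨p, -, rfl⟩
  exact add_nonneg (hd.2.2.2 _ _) dist_nonneg

theorem prohorovWrt_le_of_forall_lt {Z : Type*} [MeasurableSpace Z] {dZ : Z → Z → ℝ}
    {m m' : Measure Z} {t : ℝ} (ht : 0 ≤ t)
    (h : ∀ δ, t < δ → ∀ A : Set Z,
      m A ≤ m' {b | ∃ a ∈ A, dZ a b < δ} + ENNReal.ofReal δ ∧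
      m' A ≤ m {b | ∃ a ∈ A, dZ a b < δ} + ENNReal.ofReal δ) :
    prohorovWrt dZ m m' ≤ t :=
  le_of_forall_pos_le_add fun η hη =>
    csInf_le ⟨0, fun _ hδ => hδ.1.le⟩ ⟨by linarith, h _ (by linarith)⟩

theorem measurableEmbedding_inl {α β : Type*} [MeasurableSpace α] [MeasurableSpace β] :
    MeasurableEmbedding (Sum.inl : α → α ⊕ β) :=
  ⟨Sum.inl_injective, measurable_inl, fun _ hs => hs.inl_image⟩

theorem measurableEmbedding_inr {α β : Type*} [MeasurableSpace α] [MeasurableSpace β] :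
    MeasurableEmbedding (Sum.inr : β → α ⊕ β) :=
  ⟨Sum.inr_injective, measurable_inr, fun _ hs => hs.inr_image⟩

theorem MeasurableEmbedding.map_comap_apply {α β γ : Type*} [MeasurableSpace α]
    [MeasurableSpace β] [MeasurableSpace γ] {e : α → β} {f : α → γ}
    (he : MeasurableEmbedding e) (hf : MeasurableEmbedding f) (μ : Measure γ) (A : Set β) :
    (μ.comap f).map e A = μ (f '' (e ⁻¹' A)) := by
  rw [he.map_apply, hf.comap_apply]

section Restriction

variable {T : Type*} [MetricSpace T] {S S' : Set T}

theorem prohorovWrt_map_comap_le [MeasurableSpace T] (μ : Measure T) (hS : MeasurableSet S)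
    (hS' : MeasurableSet S') (hSS' : S ⊆ S') (hfin : μ (S' \ S) ≠ ⊤) :
    prohorovWrt (fun a b => dist (Sum.elim Subtype.val Subtype.val a : T)
        (Sum.elim Subtype.val Subtype.val b))
      ((μ.comap (Subtype.val : S → T)).map Sum.inl)
      ((μ.comap (Subtype.val : S' → T)).map Sum.inr) ≤ (μ (S' \ S)).toReal := by
  refine prohorovWrt_le_of_forall_lt ENNReal.toReal_nonneg fun δ hδ A => ?_
  have hδ0 : 0 < δ := ENNReal.toReal_nonneg.trans_lt hδ
  simp only [measurableEmbedding_inl.map_comap_apply (.subtype_coe hS),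
    measurableEmbedding_inr.map_comap_apply (.subtype_coe hS')]
  constructor
  · refine le_add_right (measure_mono ?_)
    rintro _ ⟨a, ha, rfl⟩
    exact ⟨⟨a, hSS' a.2⟩, ⟨.inl a, ha, by simpa using hδ0⟩, rfl⟩
  · -- the part of `B` outside `S` lies in the shell `S' \ S`, of mass less than `δ`
    set B := Subtype.val '' (Sum.inr ⁻¹' A : Set S')
    calc μ B ≤ μ (B ∩ S) + μ (B \ S) := measure_le_inter_add_sdiff μ B S
      _ ≤ _ := add_le_add (measure_mono ?_) ?_
    · rintro _ ⟨⟨a, ha, rfl⟩, haS⟩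
      exact ⟨⟨a, haS⟩, ⟨.inr a, ha, by simpa using hδ0⟩, rfl⟩
    · calc μ (B \ S) ≤ μ (S' \ S) := measure_mono (sdiff_subset_sdiff_left (by simp [B]))
        _ ≤ ENNReal.ofReal δ := by
          rw [← ENNReal.ofReal_toReal hfin]
          exact ENNReal.ofReal_le_ofReal hδ.le

variable {M : Type*} [PseudoMetricSpace M]

theorem IsCompact.bddAbove_dist_comp {K : Set T} (hK : IsCompact K) {φ : T → M}
    (hφ : ContinuousOn φ K) (ε : ℝ) :
    BddAbove {w | ∃ x ∈ K, ∃ y ∈ K, dist x y ≤ ε ∧ w = dist (φ x) (φ y)} := by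
  obtain ⟨B, hB⟩ := isBounded_iff.1 (hK.image_of_continuousOn hφ).isBounded
  refine ⟨B, ?_⟩
  rintro _ ⟨x, hx, y, hy, -, rfl⟩
  exact hB (mem_image_of_mem φ hx) (mem_image_of_mem φ hy)

theorem sSup_dist_add_dist_le (φ : T → M) (hSS' : S ⊆ S') {ε : ℝ} (hε : 0 ≤ ε)
    (hbdd : BddAbove {w | ∃ x ∈ S', ∃ y ∈ S', dist x y ≤ ε ∧ w = dist (φ x) (φ y)}) :
    sSup {w | ∃ p ∈ {p : S × S' | dist (p.1 : T) p.2 ≤ ε},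
        w = dist (p.1 : T) p.2 + dist (φ p.1) (φ p.2)} ≤
      ε + sSup {w | ∃ x ∈ S', ∃ y ∈ S', dist x y ≤ ε ∧ w = dist (φ x) (φ y)} := by
  refine Real.sSup_le ?_ (add_nonneg hε (Real.sSup_nonneg ?_))
  · rintro _ ⟨p, hp, rfl⟩
    exact add_le_add hp (le_csSup hbdd ⟨_, hSS' p.1.2, _, p.2.2, hp, rfl⟩)
  · rintro _ ⟨x, -, y, -, -, rfl⟩
    exact dist_nonneg

end Restriction

/-- For a measured rooted spatial tree `(T, d_T, μ, φ, ρ)` (a complete, locally compact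
real tree with a locally finite Borel measure and a continuous map `φ : T → M`), the
restrictions `T^(r)`, `T^(r+ε)` to closed balls about the root satisfy
`Δ_c(T^(r), T^(r+ε)) ≤ μ(T^(r+ε) ∖ T^(r)) + ε + sup{ d_M(φx,φy) : x,y ∈ T^(r+ε), d_T(x,y) ≤ ε }`. -/
theorem stmt15 {T M : Type*} [MetricSpace T] [MeasurableSpace T] [BorelSpace T]
    [CompleteSpace T] [LocallyCompactSpace T] [MetricSpace M]
    (RT : RealTreeStruct T) (μ : Measure T) [IsLocallyFiniteMeasure μ]
    (φ : T → M) (hφ : Continuous φ) (ρ : T) (r ε : ℝ) (hr : 0 < r) (hε : 0 < ε) :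
    DeltaC
      (μ.comap (Subtype.val : Metric.closedBall ρ r → T))
      (μ.comap (Subtype.val : Metric.closedBall ρ (r + ε) → T))
      (fun x => φ x.1) (fun x => φ x.1)
      (⟨ρ, Metric.mem_closedBall_self hr.le⟩ : Metric.closedBall ρ r)
      (⟨ρ, Metric.mem_closedBall_self (by positivity)⟩ : Metric.closedBall ρ (r + ε)) ≤
    (μ (Metric.closedBall ρ (r + ε) \ Metric.closedBall ρ r)).toReal + ε +
      sSup {w : ℝ | ∃ x ∈ Metric.closedBall ρ (r + ε), ∃ y ∈ Metric.closedBall ρ (r + ε),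
        dist x y ≤ ε ∧ w = dist (φ x) (φ y)} := by
  have hsub : closedBall ρ r ⊆ closedBall ρ (r + ε) :=
    closedBall_subset_closedBall (by linarith)
  have := RT.properSpace
  have hK : IsCompact (closedBall ρ (r + ε)) := isCompact_closedBall ρ _
  refine (deltaC_le (isPseudoMetric_dist_comp (Sum.elim Subtype.val Subtype.val))
    (fun _ _ => rfl) (fun _ _ => rfl) (C := {p | dist (p.1 : T) p.2 ≤ ε})
    (by simpa using hε.le) (fun x => ⟨⟨x, hsub x.2⟩, by simpa using hε.le⟩)
    (fun x' => ?_)).trans ?_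
  · obtain ⟨z, hz, hzx⟩ := RT.exists_mem_closedBall_dist_le hr.le hε.le x'.2
    exact ⟨⟨z, hz⟩, hzx⟩
  rw [add_assoc]
  exact add_le_add
    (prohorovWrt_map_comap_le μ measurableSet_closedBall measurableSet_closedBall hsub
      (measure_mono sdiff_subset |>.trans_lt hK.measure_lt_top).ne)
    (sSup_dist_add_dist_le φ hsub hε.le (hK.bddAbove_dist_comp hφ.continuousOn ε))
end

section
/- Let (T, d) and (T', d') be compact real trees with continuous maps φ: T → M, φ': T' → M into a metric space (M, d_M), and let 𝒞 be a correspondence between T and T' such that |d(u,v) − d'(u',v')| < 2δ for all (u,u'), (v,v') ∈ 𝒞, and d_M(φ(u), φ'(u')) ≤ δ for all (u,u') ∈ 𝒞. Then for any (x,x'), (y,y') ∈ 𝒞, the Hausdorff distance in M between φ(γ_T(x,y)) and φ'(γ_{T'}(x',y')) is at most η := δ + sup{ d_M(φ(z), φ(w)) : z, w ∈ T, d(z,w) < 5δ }. In particular, writing d^S(x,y) = diam(φ(γ_T(x,y))) and d'^S similarly, |d^S(x,y) − d'^S(x',y')| ≤ 2η. -/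
/-- Median lemma: in a real tree, for any `x y z` there is a point `p` on the arc
from `x` to `y` realizing the excess `dist x z + dist z y - dist x y = 2 * dist z p`. -/
lemma realTree_median {T : Type*} [MetricSpace T] (RT : RealTreeStruct T) (x y z : T) :
    ∃ p ∈ RT.arc x y, dist x z + dist z y = dist x y + 2 * dist z p := by
  have hcov : RT.arc x z ⊆ RT.arc x y ∪ RT.arc y z := RT.arc_triangle x y z
  have hA : IsClosed (RT.arc x y) := (RT.compact x y).isClosed
  have hB : IsClosed (RT.arc y z) := (RT.compact y z).isClosed
  have hconn : IsPreconnected (RT.arc x z) := (RT.connected x z).isPreconnected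
  obtain ⟨p, hpxz, hpxy, hpyz⟩ :=
    (isPreconnected_closed_iff.1 hconn) _ _ hA hB hcov
      ⟨x, RT.mem_left _ _, RT.mem_left _ _⟩ ⟨z, RT.mem_right _ _, RT.mem_right _ _⟩
  have e1 := RT.geodesic x z p hpxz
  have e2 := RT.geodesic x y p hpxy
  have e3 := RT.geodesic y z p hpyz
  refine ⟨p, hpxy, ?_⟩
  have c1 : dist p z = dist z p := dist_comm p z
  have c2 : dist z y = dist y z := dist_comm z y
  have c3 : dist p y = dist y p := dist_comm p y
  linarith

/-- If `𝒞` is a correspondence between compact real trees `T`, `T'` with metric distortion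
`< 2δ` and embedding distortion `≤ δ`, then for corresponding pairs `(x,x'), (y,y')` the
Hausdorff distance between `φ(γ_T(x,y))` and `φ'(γ_{T'}(x',y'))` is at most
`η = δ + sup{ d_M(φz,φw) : d(z,w) < 5δ }`; in particular the Schramm pseudometrics satisfy
`|d^S(x,y) − d'^S(x',y')| ≤ 2η`. -/
theorem stmt16 {T T' M : Type*} [MetricSpace T] [MetricSpace T'] [MetricSpace M]
    [CompactSpace T] [CompactSpace T']
    (RT : RealTreeStruct T) (RT' : RealTreeStruct T')
    (φ : T → M) (φ' : T' → M) (hφ : Continuous φ) (hφ' : Continuous φ')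
    (C : Set (T × T'))
    (hC1 : ∀ x : T, ∃ x' : T', (x, x') ∈ C) (hC2 : ∀ x' : T', ∃ x : T, (x, x') ∈ C)
    (δ : ℝ) (hδ : 0 < δ)
    (hdist : ∀ u u' v v', (u, u') ∈ C → (v, v') ∈ C → |dist u v - dist u' v'| < 2 * δ)
    (hφC : ∀ u u', (u, u') ∈ C → dist (φ u) (φ' u') ≤ δ)
    (x : T) (x' : T') (y : T) (y' : T') (hx : (x, x') ∈ C) (hy : (y, y') ∈ C) :
    Metric.hausdorffDist (φ '' RT.arc x y) (φ' '' RT'.arc x' y') ≤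
      δ + sSup {v : ℝ | ∃ z w : T, dist z w < 5 * δ ∧ v = dist (φ z) (φ w)} ∧
    |Metric.diam (φ '' RT.arc x y) - Metric.diam (φ' '' RT'.arc x' y')| ≤
      2 * (δ + sSup {v : ℝ | ∃ z w : T, dist z w < 5 * δ ∧ v = dist (φ z) (φ w)}) := by
  set S := sSup {v : ℝ | ∃ z w : T, dist z w < 5 * δ ∧ v = dist (φ z) (φ w)} with hS
  have hbdd : BddAbove {v : ℝ | ∃ z w : T, dist z w < 5 * δ ∧ v = dist (φ z) (φ w)} := by
    refine ⟨Metric.diam (Set.range φ), ?_⟩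
    rintro v ⟨z, w, -, rfl⟩
    exact Metric.dist_le_diam_of_mem (isCompact_range hφ).isBounded ⟨z, rfl⟩ ⟨w, rfl⟩
  have hkey : ∀ z w : T, dist z w < 5 * δ → dist (φ z) (φ w) ≤ S :=
    fun z w h => le_csSup hbdd ⟨z, w, h, rfl⟩
  have hS0 : 0 ≤ S := by
    refine le_csSup hbdd ⟨x, x, ?_, (dist_self (φ x)).symm⟩
    simp only [dist_self]; linarith
  have hη : (0:ℝ) ≤ δ + S := by linarith
  -- forward pointwise bound
  have Hfwd : ∀ a ∈ φ '' RT.arc x y, ∃ b ∈ φ' '' RT'.arc x' y', dist a b ≤ δ + S := by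
    rintro a ⟨z, hz, rfl⟩
    obtain ⟨z', hz'⟩ := hC1 z
    obtain ⟨p', hp', hmed⟩ := realTree_median RT' x' y' z'
    have hgeo := RT.geodesic x y z hz
    have d1 := abs_lt.1 (hdist x x' z z' hx hz')
    have d2 := abs_lt.1 (hdist z z' y y' hz' hy)
    have d3 := abs_lt.1 (hdist x x' y y' hx hy)
    have hzp' : dist z' p' < 3 * δ := by linarith [d1.1, d2.1, d3.2]
    obtain ⟨q, hq⟩ := hC2 p'
    have d4 := abs_lt.1 (hdist z z' q p' hz' hq)
    have hzq : dist z q < 5 * δ := by linarith [d4.2]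
    refine ⟨φ' p', ⟨p', hp', rfl⟩, ?_⟩
    calc dist (φ z) (φ' p') ≤ dist (φ z) (φ q) + dist (φ q) (φ' p') := dist_triangle _ _ _
      _ ≤ S + δ := add_le_add (hkey z q hzq) (hφC q p' hq)
      _ = δ + S := by ring
  -- backward pointwise bound
  have Hbwd : ∀ b ∈ φ' '' RT'.arc x' y', ∃ a ∈ φ '' RT.arc x y, dist b a ≤ δ + S := by
    rintro b ⟨z', hz', rfl⟩
    obtain ⟨z, hz⟩ := hC2 z'
    obtain ⟨p, hp, hmed⟩ := realTree_median RT x y z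
    have hgeo := RT'.geodesic x' y' z' hz'
    have d1 := abs_lt.1 (hdist x x' z z' hx hz)
    have d2 := abs_lt.1 (hdist z z' y y' hz hy)
    have d3 := abs_lt.1 (hdist x x' y y' hx hy)
    have hzp : dist z p < 3 * δ := by linarith [d1.2, d2.2, d3.1]
    refine ⟨φ p, ⟨p, hp, rfl⟩, ?_⟩
    have h1 : dist (φ' z') (φ z) ≤ δ := by rw [dist_comm]; exact hφC z z' hz
    calc dist (φ' z') (φ p) ≤ dist (φ' z') (φ z) + dist (φ z) (φ p) := dist_triangle _ _ _
      _ ≤ δ + S := add_le_add h1 (hkey z p (by linarith))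
  have hHaus : Metric.hausdorffDist (φ '' RT.arc x y) (φ' '' RT'.arc x' y') ≤ δ + S :=
    Metric.hausdorffDist_le_of_mem_dist hη Hfwd Hbwd
  refine ⟨hHaus, ?_⟩
  have hbA : Bornology.IsBounded (φ '' RT.arc x y) := ((RT.compact x y).image hφ).isBounded
  have hbB : Bornology.IsBounded (φ' '' RT'.arc x' y') := ((RT'.compact x' y').image hφ').isBounded
  have hdA : Metric.diam (φ '' RT.arc x y) ≤ Metric.diam (φ' '' RT'.arc x' y') + 2 * (δ + S) := by
    refine Metric.diam_le_of_forall_dist_le (by have := Metric.diam_nonneg (s := φ' '' RT'.arc x' y'); linarith) ?_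
    intro a ha c hc
    obtain ⟨b, hb, hab⟩ := Hfwd a ha
    obtain ⟨d, hd, hcd⟩ := Hfwd c hc
    have hbd : dist b d ≤ Metric.diam (φ' '' RT'.arc x' y') := Metric.dist_le_diam_of_mem hbB hb hd
    calc dist a c ≤ dist a b + dist b c := dist_triangle _ _ _
      _ ≤ dist a b + (dist b d + dist d c) := by linarith [dist_triangle b d c]
      _ ≤ (δ + S) + (Metric.diam (φ' '' RT'.arc x' y') + (δ + S)) := by
          have : dist d c = dist c d := dist_comm d c
          linarith
      _ = Metric.diam (φ' '' RT'.arc x' y') + 2 * (δ + S) := by ring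
  have hdB : Metric.diam (φ' '' RT'.arc x' y') ≤ Metric.diam (φ '' RT.arc x y) + 2 * (δ + S) := by
    refine Metric.diam_le_of_forall_dist_le (by have := Metric.diam_nonneg (s := φ '' RT.arc x y); linarith) ?_
    intro a ha c hc
    obtain ⟨b, hb, hab⟩ := Hbwd a ha
    obtain ⟨d, hd, hcd⟩ := Hbwd c hc
    have hbd : dist b d ≤ Metric.diam (φ '' RT.arc x y) := Metric.dist_le_diam_of_mem hbA hb hd
    calc dist a c ≤ dist a b + dist b c := dist_triangle _ _ _
      _ ≤ dist a b + (dist b d + dist d c) := by linarith [dist_triangle b d c]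
      _ ≤ (δ + S) + (Metric.diam (φ '' RT.arc x y) + (δ + S)) := by
          have : dist d c = dist c d := dist_comm d c
          linarith
      _ = Metric.diam (φ '' RT.arc x y) + 2 * (δ + S) := by ring
  rw [abs_sub_le_iff]
  constructor <;> linarith
end
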